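/- arXiv:2112.11509 — 2 statements merged into one kernel-verified Lean document; each statement's English description precedes it below -/
import Mathlib

section
/- Let Φ be a smooth map from an open set U of a graded Lie group G to a graded Lie group H, let x ∈ U, and let 𝔡_xΦ : 𝔤 → 𝔥 be the left-translated differential of Φ at x. If Φ is Pansu differentiable at x, then Φ preserves the filtration at x: 𝔡_xΦ(𝔤_j) ⊆ 𝔥₁ ⊕ ⋯ ⊕ 𝔥_j for every j ≥ 1. -/
open Filter Set Topology

/-- Anisotropic dilations on `ℝⁿ` with integer weights `w`:
`(gdil w r x) i = r ^ (w i) * x i`. -/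
def gdil {n : ℕ} (w : Fin n → ℕ) (r : ℝ) (x : Fin n → ℝ) : Fin n → ℝ :=
  fun i => r ^ (w i) * x i

/-- Projection onto the layer of weight `j` (the coordinates `i` with `w i = j`),
along the other layers. -/
def gproj {n : ℕ} (w : Fin n → ℕ) (j : ℕ) (v : Fin n → ℝ) : Fin n → ℝ :=
  fun i => if w i = j then v i else 0

/-- A graded nilpotent Lie group in exponential coordinates of the first kind:
the carrier is `ℝⁿ = 𝔤` (so that `exp` and `ln` are the identity), with a smooth
polynomial group law `mul` with identity `0` and inverse `-x`, a gradation
recorded by the positive weights `w` of an adapted basis, and dilations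
`gdil w r` that are group automorphisms. -/
structure GradedGroup (n : ℕ) where
  w : Fin n → ℕ
  w_pos : ∀ i, 0 < w i
  mul : (Fin n → ℝ) → (Fin n → ℝ) → (Fin n → ℝ)
  smooth : ContDiff ℝ (⊤ : ℕ∞) fun p : (Fin n → ℝ) × (Fin n → ℝ) => mul p.1 p.2
  zero_mul : ∀ x, mul 0 x = x
  mul_zero : ∀ x, mul x 0 = x
  mul_assoc : ∀ x y z, mul (mul x y) z = mul x (mul y z)
  mul_neg : ∀ x, mul x (-x) = 0
  neg_mul : ∀ x, mul (-x) x = 0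
  dil_mul : ∀ (r : ℝ) (x y : Fin n → ℝ), gdil w r (mul x y) = mul (gdil w r x) (gdil w r y)

/-- `v` belongs to the layer `𝔤_j` of the gradation: all coordinates of weight
different from `j` vanish. -/
def inLayer {n : ℕ} (w : Fin n → ℕ) (j : ℕ) (v : Fin n → ℝ) : Prop :=
  ∀ k, w k ≠ j → v k = 0

/-- The rescaled increment `δ_{ε⁻¹}(Φ(x)⁻¹ Φ(x δ_ε z))` (in exponential
coordinates) whose limit as `ε → 0⁺` defines the Pansu derivative. -/
noncomputable def pq {n m : ℕ} (Gs : GradedGroup n) (Hs : GradedGroup m)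
    (Φ : (Fin n → ℝ) → (Fin m → ℝ)) (ε : ℝ) (x z : Fin n → ℝ) : Fin m → ℝ :=
  gdil Hs.w ε⁻¹ (Hs.mul (-(Φ x)) (Φ (Gs.mul x (gdil Gs.w ε z))))

/-- let `Φ` be a smooth map from an open set `U` of a graded Lie
group `G` to a graded Lie group `H` (both in exponential coordinates, so
`ln_H = id`, `exp_G = id`), let `x ∈ U`, and let `𝔡_xΦ = DPhi` be the
left-translated differential of `Φ` at `x`, i.e.
`DPhi V = ∂_{t=0} (Φ(x)⁻¹ · Φ(x · exp(tV)))`. If `Φ` is Pansu differentiable at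
`x` (with Pansu derivative `PD`), then `Φ` preserves the filtration at `x`:
`𝔡_xΦ(𝔤_j) ⊆ 𝔥₁ ⊕ ⋯ ⊕ 𝔥_j`, i.e. for `V ∈ 𝔤_j` all components of `DPhi V` of
weight `> j` vanish. -/
theorem pansu_diff_preserves_filtration {n m : ℕ}
    (Gs : GradedGroup n) (Hs : GradedGroup m)
    (U : Set (Fin n → ℝ)) (hU : IsOpen U)
    (Φ : (Fin n → ℝ) → (Fin m → ℝ)) (hΦ : ContDiffOn ℝ (⊤ : ℕ∞) Φ U)
    (x : Fin n → ℝ) (hx : x ∈ U)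
    (DPhi : (Fin n → ℝ) → (Fin m → ℝ))
    (hD : ∀ V : Fin n → ℝ,
      HasDerivAt (fun t : ℝ => Hs.mul (-(Φ x)) (Φ (Gs.mul x (t • V)))) (DPhi V) 0)
    (PD : (Fin n → ℝ) → (Fin m → ℝ))
    (hPD : ∀ z : Fin n → ℝ,
      Tendsto (fun ε : ℝ => pq Gs Hs Φ ε x z) (𝓝[>] (0 : ℝ)) (𝓝 (PD z))) :
    ∀ j : ℕ, 1 ≤ j → ∀ V : Fin n → ℝ, inLayer Gs.w j V →
      ∀ i : Fin m, j < Hs.w i → DPhi V i = 0 := by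
  intro j hj V hV i hi
  set f : ℝ → (Fin m → ℝ) := fun t => Hs.mul (-(Φ x)) (Φ (Gs.mul x (t • V))) with hf
  have hgd : ∀ ε : ℝ, gdil Gs.w ε V = (ε ^ j) • V := by
    intro ε; funext k
    by_cases h : Gs.w k = j
    · simp [gdil, h]
    · simp [gdil, hV k h]
  have hf0 : f 0 = 0 := by
    simp [hf, Gs.mul_zero, Hs.neg_mul]
  have hci : HasDerivAt (fun t => f t i) (DPhi V i) 0 := (hasDerivAt_pi.mp (hD V)) i
  have h1 : Tendsto (fun t : ℝ => t⁻¹ * f t i) (𝓝[≠] (0:ℝ)) (𝓝 (DPhi V i)) := by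
    have := hasDerivAt_iff_tendsto_slope.mp hci
    refine this.congr' ?_
    filter_upwards [self_mem_nhdsWithin] with t ht
    simp [slope_def_field, hf0, div_eq_inv_mul]
  have hpowj : Tendsto (fun ε : ℝ => ε ^ j) (𝓝[>] (0:ℝ)) (𝓝[≠] (0:ℝ)) := by
    apply tendsto_nhdsWithin_of_tendsto_nhds_of_eventually_within
    · have := ((continuous_pow j).tendsto (0:ℝ)).mono_left (nhdsWithin_le_nhds (s := Ioi (0:ℝ)))
      simpa [zero_pow (by omega : j ≠ 0)] using this
    · filter_upwards [self_mem_nhdsWithin] with ε (hε : ε ∈ Ioi (0:ℝ))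
      exact pow_ne_zero _ (ne_of_gt hε)
  have h1' : Tendsto (fun ε : ℝ => (ε ^ j)⁻¹ * f (ε ^ j) i) (𝓝[>] (0:ℝ)) (𝓝 (DPhi V i)) :=
    h1.comp hpowj
  have h2 : Tendsto (fun ε : ℝ => pq Gs Hs Φ ε x V i) (𝓝[>] (0:ℝ)) (𝓝 (PD V i)) :=
    ((continuous_apply i).tendsto _).comp (hPD V)
  have h3 : Tendsto (fun ε : ℝ => ε ^ (Hs.w i - j)) (𝓝[>] (0:ℝ)) (𝓝 0) := by
    have := ((continuous_pow (Hs.w i - j)).tendsto (0:ℝ)).mono_left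
      (nhdsWithin_le_nhds (s := Ioi (0:ℝ)))
    simpa [zero_pow (by omega : Hs.w i - j ≠ 0)] using this
  have h4 : Tendsto (fun ε : ℝ => ε ^ (Hs.w i - j) * pq Gs Hs Φ ε x V i)
      (𝓝[>] (0:ℝ)) (𝓝 0) := by
    simpa using h3.mul h2
  have heq : ∀ᶠ ε in 𝓝[>] (0:ℝ),
      ε ^ (Hs.w i - j) * pq Gs Hs Φ ε x V i = (ε ^ j)⁻¹ * f (ε ^ j) i := by
    filter_upwards [self_mem_nhdsWithin] with ε (hε : ε ∈ Ioi (0:ℝ))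
    have hε0 : (ε : ℝ) ≠ 0 := ne_of_gt hε
    have hpow : ε ^ (Hs.w i - j) * ε ^ j = ε ^ (Hs.w i) := by
      rw [← pow_add, Nat.sub_add_cancel hi.le]
    simp only [pq, hgd, gdil, hf, inv_pow]
    field_simp
    rw [← hpow]
  have h5 : Tendsto (fun ε : ℝ => (ε ^ j)⁻¹ * f (ε ^ j) i) (𝓝[>] (0:ℝ)) (𝓝 0) :=
    h4.congr' heq
  exact tendsto_nhds_unique h1' h5
end

section
/- Let Φ be a smooth map from an open set U of a graded Lie group G to a graded Lie group H, x ∈ U, and V ∈ 𝔤_j. Then for any i: if j > i, lim_{ε→0} ε^{-i} pr_{𝔥,i}(ln_H(Φ(x)⁻¹Φ(x exp_G(ε^j V)))) = 0, and if j = i this limit equals pr_{𝔥,i}(𝔡_xΦ(V)). (No Pansu differentiability or filtration-preserving hypothesis is needed.) -/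
open Filter Set Topology

/-- let `Φ` be a smooth map from an open set `U` of a graded group
`G` to a graded group `H` (in exponential coordinates), `x ∈ U`, and `V ∈ 𝔤_j`.
Then, with no Pansu differentiability or filtration-preserving hypothesis, for
any `i`: if `j > i` then
`ε^{-i} pr_{𝔥,i}(ln_H(Φ(x)⁻¹ Φ(x exp_G(ε^j V)))) → 0` as `ε → 0⁺`, and if
`j = i` this quantity tends to `pr_{𝔥,i}(𝔡_xΦ(V))`. -/
theorem layer_limits_of_smooth {n m : ℕ}
    (Gs : GradedGroup n) (Hs : GradedGroup m)
    (U : Set (Fin n → ℝ)) (hU : IsOpen U)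
    (Φ : (Fin n → ℝ) → (Fin m → ℝ)) (hΦ : ContDiffOn ℝ (⊤ : ℕ∞) Φ U)
    (x : Fin n → ℝ) (hx : x ∈ U)
    (DPhi : (Fin n → ℝ) → (Fin m → ℝ))
    (hD : ∀ V : Fin n → ℝ,
      HasDerivAt (fun t : ℝ => Hs.mul (-(Φ x)) (Φ (Gs.mul x (t • V)))) (DPhi V) 0) :
    ∀ (i j : ℕ) (V : Fin n → ℝ), inLayer Gs.w j V →
      (i < j → Tendsto
          (fun ε : ℝ => (ε ^ i)⁻¹ •
            gproj Hs.w i (Hs.mul (-(Φ x)) (Φ (Gs.mul x ((ε ^ j) • V)))))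
          (𝓝[>] (0 : ℝ)) (𝓝 0)) ∧
      (i = j → Tendsto
          (fun ε : ℝ => (ε ^ i)⁻¹ •
            gproj Hs.w i (Hs.mul (-(Φ x)) (Φ (Gs.mul x ((ε ^ j) • V)))))
          (𝓝[>] (0 : ℝ)) (𝓝 (gproj Hs.w i (DPhi V)))) := by
  intro i j V _hV
  set f : ℝ → (Fin m → ℝ) := fun t => Hs.mul (-(Φ x)) (Φ (Gs.mul x (t • V))) with hf
  have hf0 : f 0 = 0 := by
    simp only [hf, zero_smul, Gs.mul_zero, Hs.neg_mul]
  have hcont : Continuous (gproj Hs.w i) := by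
    refine continuous_pi fun k => ?_
    by_cases h : Hs.w k = i
    · simpa [gproj, h] using continuous_apply k
    · simp only [gproj, h, if_false]; exact continuous_const
  have hsm : ∀ (c : ℝ) (v : Fin m → ℝ), gproj Hs.w i (c • v) = c • gproj Hs.w i v := by
    intro c v; funext k; by_cases h : Hs.w k = i <;> simp [gproj, h]
  have hslope : Tendsto (fun t : ℝ => t⁻¹ • f t) (𝓝[≠] (0:ℝ)) (𝓝 (DPhi V)) := by
    have h1 := hasDerivAt_iff_tendsto_slope.mp (hD V)
    have h2 : slope f 0 = fun t : ℝ => t⁻¹ • f t := by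
      funext t; simp [slope, hf0]
    rw [h2] at h1
    exact h1
  have hpow : ∀ a : ℕ, 0 < a → Tendsto (fun ε : ℝ => ε ^ a) (𝓝[>] (0:ℝ)) (𝓝[≠] (0:ℝ)) := by
    intro a ha
    apply tendsto_nhdsWithin_of_tendsto_nhds_of_eventually_within
    · have : Tendsto (fun ε : ℝ => ε ^ a) (𝓝 0) (𝓝 0) := by
        simpa [zero_pow ha.ne'] using (continuous_pow a).tendsto (0:ℝ)
      exact this.mono_left nhdsWithin_le_nhds
    · filter_upwards [self_mem_nhdsWithin] with ε (hε : (0:ℝ) < ε)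
      exact (pow_pos hε a).ne'
  constructor
  · intro hij
    have hj : 0 < j := lt_of_le_of_lt (Nat.zero_le i) hij
    have hB : Tendsto (fun ε : ℝ => (ε ^ j)⁻¹ • f (ε ^ j)) (𝓝[>] (0:ℝ)) (𝓝 (DPhi V)) :=
      hslope.comp (hpow j hj)
    have hBp : Tendsto (fun ε : ℝ => (ε ^ j)⁻¹ • gproj Hs.w i (f (ε ^ j)))
        (𝓝[>] (0:ℝ)) (𝓝 (gproj Hs.w i (DPhi V))) := by
      have := (hcont.tendsto _).comp hB
      refine this.congr fun ε => ?_
      simp [Function.comp, hsm]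
    have hsc : Tendsto (fun ε : ℝ => ε ^ (j - i)) (𝓝[>] (0:ℝ)) (𝓝 (0:ℝ)) := by
      have : Tendsto (fun ε : ℝ => ε ^ (j - i)) (𝓝 0) (𝓝 0) := by
        simpa [zero_pow (Nat.sub_ne_zero_of_lt hij)] using
          (continuous_pow (j - i)).tendsto (0:ℝ)
      exact this.mono_left nhdsWithin_le_nhds
    have hmain := hsc.smul hBp
    rw [zero_smul] at hmain
    refine hmain.congr' ?_
    filter_upwards [self_mem_nhdsWithin] with ε (hε : (0:ℝ) < ε)
    rw [smul_smul]
    congr 1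
    have hne : ε ≠ 0 := hε.ne'
    have hji : j - i + i = j := Nat.sub_add_cancel hij.le
    field_simp
    rw [← pow_add, hji]
  · intro hij
    subst hij
    rcases Nat.eq_zero_or_pos i with hi0 | hi
    · subst hi0
      have hz : ∀ v : Fin m → ℝ, gproj Hs.w 0 v = 0 := by
        intro v; funext k; simp [gproj, (Hs.w_pos k).ne']
      simp only [hz]
      simp only [smul_zero]
      exact tendsto_const_nhds
    · have hB : Tendsto (fun ε : ℝ => (ε ^ i)⁻¹ • f (ε ^ i)) (𝓝[>] (0:ℝ)) (𝓝 (DPhi V)) :=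
        hslope.comp (hpow i hi)
      have := (hcont.tendsto _).comp hB
      refine this.congr fun ε => ?_
      simp [Function.comp, hsm]
      rfl
end
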